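/- arXiv:1002.3439 — 7 statements merged into one kernel-verified Lean document; each statement's English description precedes it below -/
import Mathlib

section
/- Let m be the smallest positive integer for which there exist an integer n ≥ 1 and an integer i with 0 ≤ i < p satisfying m·m_p = n·m_0 + m_i. Then m = a + 1, and in this minimal relation necessarily i = p − b and n = a + d. -/
/-!
Since `m_p = m_0 + p·d` and `m_i = m_0 + i·d`, a relation `M·m_p = n·m_0 + m_i` says
`M·m_0 + (M·p)·d = (n + 1)·m_0 + i·d`. As `m_0` and `d` are coprime, the two representations
differ by a multiple `s` of `(d, -m_0)`: `n + 1 = M + d·s` and `M·p = i + m_0·s`, with `s ≥ 1`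
because `i < p`. Then `M·p ≥ m_0 > a·p` forces `M ≥ a + 1`, and `M = a + 1` is attained with
`s = 1`, `i = p - b`, `n = a + d`; for `M = a + 1` already `s = 2` would need
`(a + 1)·p ≥ 2·m_0`, which fails.
-/

theorem Nat.Coprime.exists_of_mul_add_mul_eq {m d u v x y : ℕ} (hcop : m.Coprime d)
    (hm : 0 < m) (hyx : y ≤ x) (h : u * m + x * d = v * m + y * d) :
    ∃ s, v = u + d * s ∧ x = y + m * s := by
  obtain ⟨t, rfl⟩ := Nat.exists_eq_add_of_le hyx
  have htd : u * m + t * d = v * m := by linarith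
  obtain ⟨s, rfl⟩ : m ∣ t :=
    hcop.dvd_of_dvd_mul_right ⟨v - u, by rw [Nat.mul_sub, mul_comm m v, mul_comm m u]; omega⟩
  refine ⟨s, Nat.eq_of_mul_eq_mul_left hm ?_, rfl⟩
  linarith

section ArithmeticSequence

variable {p d a b : ℕ} {m : ℕ → ℕ}

theorem exists_of_mul_eq_mul_zero_add (hm : ∀ i, m i = a * p + b + i * d)
    (hcop : (m 0).Coprime d) (hm0 : 0 < m 0) {M n i : ℕ} (hi : i ≤ M * p)
    (h : M * m p = n * m 0 + m i) :
    ∃ s, n + 1 = M + d * s ∧ M * p = i + m 0 * s := by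
  refine hcop.exists_of_mul_add_mul_eq hm0 hi ?_
  simp only [hm] at h ⊢
  linarith

theorem lt_of_mul_eq_add_mul (hb : 1 ≤ b) {M i s : ℕ} (hi : i < p) (hM : 1 ≤ M)
    (h : M * p = i + (a * p + b) * s) : 1 ≤ s ∧ a < M := by
  have hs : 1 ≤ s := Nat.one_le_iff_ne_zero.2 <| by
    rintro rfl
    nlinarith
  refine ⟨hs, Nat.lt_of_mul_lt_mul_right (a := p) ?_⟩
  have := Nat.le_mul_of_pos_right (a * p + b) hs
  omega

theorem eq_one_of_add_one_mul_eq (ha : 1 ≤ a) (hb : 1 ≤ b) {i s : ℕ} (hs : 1 ≤ s)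
    (h : (a + 1) * p = i + (a * p + b) * s) : s = 1 := by
  by_contra! hs1
  have hs2 : 2 ≤ s := by omega
  nlinarith [Nat.mul_le_mul_left (a * p + b) hs2, Nat.le_mul_of_pos_left p ha]

end ArithmeticSequence

theorem smallest_multiple_relation_general
    (p d a b : ℕ) (ha : 1 ≤ a) (hb1 : 1 ≤ b) (hbp : b ≤ p)
    (m : ℕ → ℕ) (hm : ∀ i, m i = a * p + b + i * d)
    (hgcd : Nat.gcd (m 0) d = 1)
    (M : ℕ) (hMpos : 1 ≤ M)
    (hMrel : ∃ n, 1 ≤ n ∧ ∃ i, i < p ∧ M * m p = n * m 0 + m i)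
    (hMmin : ∀ M', 1 ≤ M' →
      (∃ n, 1 ≤ n ∧ ∃ i, i < p ∧ M' * m p = n * m 0 + m i) → M ≤ M') :
    M = a + 1 ∧
      ∀ n, 1 ≤ n → ∀ i, i < p → M * m p = n * m 0 + m i → i = p - b ∧ n = a + d := by
  have hm0 : m 0 = a * p + b := by simp [hm]
  have hm0pos : 0 < m 0 := by omega
  have hMp : ∀ {i}, i < p → i ≤ M * p := fun hi => hi.le.trans (Nat.le_mul_of_pos_left p hMpos)
  have hwitness : (a + 1) * m p = (a + d) * m 0 + m (p - b) := by
    obtain ⟨c, rfl⟩ := Nat.exists_eq_add_of_le hbp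
    simp only [hm, Nat.add_sub_cancel_left]
    ring
  have hle : M ≤ a + 1 := hMmin _ (by omega) ⟨a + d, by omega, p - b, by omega, hwitness⟩
  obtain ⟨n, -, i, hi, hrel⟩ := hMrel
  obtain ⟨s, -, hs⟩ := exists_of_mul_eq_mul_zero_add hm hgcd hm0pos (hMp hi) hrel
  have hM : M = a + 1 := le_antisymm hle (lt_of_mul_eq_add_mul hb1 hi hMpos (hm0 ▸ hs)).2
  refine ⟨hM, fun n _ i hi hrel => ?_⟩
  obtain ⟨s, hn, hs⟩ := exists_of_mul_eq_mul_zero_add hm hgcd hm0pos (hMp hi) hrel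
  rw [hm0, hM] at hs
  obtain rfl := eq_one_of_add_one_mul_eq ha hb1 (lt_of_mul_eq_add_mul hb1 hi (by omega) hs).1 hs
  rw [mul_one, add_one_mul] at hs
  omega

/-- Let `M` be the smallest positive integer for which there exist `n ≥ 1` and
`0 ≤ i < p` with `M·m_p = n·m_0 + m_i`. Then `M = a + 1`, and in this minimal relation
necessarily `i = p - b` and `n = a + d`. -/
theorem smallest_multiple_relation
    (p d a b : ℕ) (hp : 2 ≤ p) (hd : 1 ≤ d) (ha : 1 ≤ a) (hb1 : 1 ≤ b) (hbp : b ≤ p)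
    (m : ℕ → ℕ) (hm : ∀ i, m i = a * p + b + i * d)
    (hgcd : Nat.gcd (m 0) d = 1)
    (hmin : ∀ i ≤ p, m i ∉ AddSubmonoid.closure {x : ℕ | ∃ j ≤ p, j ≠ i ∧ x = m j})
    (M : ℕ) (hMpos : 1 ≤ M)
    (hMrel : ∃ n, 1 ≤ n ∧ ∃ i, i < p ∧ M * m p = n * m 0 + m i)
    (hMmin : ∀ M', 1 ≤ M' →
      (∃ n, 1 ≤ n ∧ ∃ i, i < p ∧ M' * m p = n * m 0 + m i) → M ≤ M') :
    M = a + 1 ∧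
      ∀ n, 1 ≤ n → ∀ i, i < p → M * m p = n * m 0 + m i → i = p - b ∧ n = a + d :=
  smallest_multiple_relation_general p d a b ha hb1 hbp m hm hgcd M hMpos hMrel hMmin
end

section
/- Suppose m, n are integers with m, n ≥ 1 and i is an integer with 0 ≤ i < p such that m·m_p = n·m_0 + m_i. Then m_0 divides m·p − i, the quotient is at least 1, and consequently m ≥ a + 1. -/
/-!
Since `m_j = m_0 + j·d`, the relation `M·m_p = n·m_0 + m_i` rearranges to
`(M·p − i)·d = (n + 1 − M)·m_0`, and `gcd(m_0, d) = 1` gives `m_0 ∣ M·p − i`. As `i < p ≤ M·p`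
this multiple of `m_0` is positive, hence at least `m_0 = a·p + b > a·p`, which forces `M > a`.
-/

theorem int_mul_sub_mul_eq_of_relation {m : ℕ → ℕ} {d : ℕ} (hm : ∀ j, m j = m 0 + j * d)
    {M n p i : ℕ} (hrel : M * m p = n * m 0 + m i) :
    ((M : ℤ) * p - i) * d = ((n : ℤ) + 1 - M) * m 0 := by
  have hrelZ : (M : ℤ) * m p = n * m 0 + m i := by exact_mod_cast hrel
  rw [hm p, hm i] at hrelZ
  push_cast at hrelZ
  linear_combination hrelZ

theorem dvd_mul_sub_of_relation {m : ℕ → ℕ} {d : ℕ} (hm : ∀ j, m j = m 0 + j * d)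
    (hcop : Nat.Coprime (m 0) d) {M n p i : ℕ} (hrel : M * m p = n * m 0 + m i) :
    m 0 ∣ M * p - i := by
  rcases le_or_gt i (M * p) with hle | hlt
  · have hdvdZ : (m 0 : ℤ) ∣ ((M : ℤ) * p - i) * d :=
      ⟨(n : ℤ) + 1 - M, by rw [int_mul_sub_mul_eq_of_relation hm hrel, mul_comm]⟩
    have hdvd : (m 0 : ℤ) ∣ (M : ℤ) * p - i :=
      (Nat.isCoprime_iff_coprime.mpr hcop).dvd_of_dvd_mul_right hdvdZ
    exact_mod_cast (show (m 0 : ℤ) ∣ ((M * p - i : ℕ) : ℤ) by push_cast [hle]; exact hdvd)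
  · rw [Nat.sub_eq_zero_of_le hlt.le]
    exact dvd_zero _

theorem divisibility_from_relation_general
    (p d a b : ℕ) (hb1 : 1 ≤ b)
    (m : ℕ → ℕ) (hm : ∀ i, m i = a * p + b + i * d)
    (hgcd : Nat.gcd (m 0) d = 1)
    (M n i : ℕ) (hM : 1 ≤ M) (hi : i < p)
    (hrel : M * m p = n * m 0 + m i) :
    m 0 ∣ (M * p - i) ∧ 1 ≤ (M * p - i) / m 0 ∧ a + 1 ≤ M := by
  have hm0 : m 0 = a * p + b := by simpa using hm 0
  have hdvd : m 0 ∣ M * p - i := dvd_mul_sub_of_relation (fun j => by rw [hm0, hm]) hgcd hrel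
  have hpos : 0 < M * p - i := Nat.sub_pos_of_lt (hi.trans_le (Nat.le_mul_of_pos_left p hM))
  have hle : m 0 ≤ M * p - i := Nat.le_of_dvd hpos hdvd
  refine ⟨hdvd, Nat.div_pos hle (Nat.pos_of_dvd_of_pos hdvd hpos), ?_⟩
  have hap : a * p < M * p := by
    calc a * p < a * p + b := by omega
      _ ≤ M * p - i := hm0 ▸ hle
      _ ≤ M * p := Nat.sub_le _ _
  exact Nat.lt_of_mul_lt_mul_right hap

/-- If `M, n ≥ 1` and `0 ≤ i < p` satisfy `M·m_p = n·m_0 + m_i`, then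
`m_0` divides `M·p − i`, the quotient is at least `1`, and consequently `M ≥ a + 1`. -/
theorem divisibility_from_relation
    (p d a b : ℕ) (hp : 2 ≤ p) (hd : 1 ≤ d) (ha : 1 ≤ a) (hb1 : 1 ≤ b) (hbp : b ≤ p)
    (m : ℕ → ℕ) (hm : ∀ i, m i = a * p + b + i * d)
    (hgcd : Nat.gcd (m 0) d = 1)
    (hmin : ∀ i ≤ p, m i ∉ AddSubmonoid.closure {x : ℕ | ∃ j ≤ p, j ≠ i ∧ x = m j})
    (M n i : ℕ) (hM : 1 ≤ M) (hn : 1 ≤ n) (hi : i < p)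
    (hrel : M * m p = n * m 0 + m i) :
    m 0 ∣ (M * p - i) ∧ 1 ≤ (M * p - i) / m 0 ∧ a + 1 ≤ M :=
  divisibility_from_relation_general p d a b hb1 m hm hgcd M n i hM hi hrel
end

section
/- Let l ∈ {0, p}, let m, n be non-negative integers with m ≠ n, and let i, j ∈ {0,…,p} with i ≠ j. Then n·m_l + m_i ≠ m·m_l + m_j. -/
/-!
If `N • m_l + m_i = M • m_l + m_j` with `M < N`, cancelling `M • m_l` writes `m_j` as
`(N - M) • m_l + m_i`. For `l ≠ j` this puts `m_j` in the submonoid generated by the other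
generators, contradicting minimality; for `l = j` cancelling `m_j` forces `m_i = 0`, which is
impossible for a minimal generator since `0` lies in every submonoid.
-/

section Irredundant

variable {A ι : Type*} [AddCommMonoid A]

def IsIrredundant (P : ι → Prop) (g : ι → A) : Prop :=
  ∀ i, P i → g i ∉ AddSubmonoid.closure {x | ∃ j, P j ∧ j ≠ i ∧ x = g j}

variable {P : ι → Prop} {g : ι → A}

theorem IsIrredundant.ne_zero (hg : IsIrredundant P g) {i : ι} (hi : P i) : g i ≠ 0 :=
  fun h => hg i hi (h ▸ zero_mem _)

theorem IsIrredundant.nsmul_add_ne [IsLeftCancelAdd A] [Subsingleton (AddUnits A)]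
    (hg : IsIrredundant P g) {l i j : ι} (hl : P l) (hi : P i) (hj : P j)
    (hij : i ≠ j) {k : ℕ} (hk : k ≠ 0) : k • g l + g i ≠ g j := by
  intro h
  by_cases hlj : l = j
  · subst hlj
    obtain ⟨k, rfl⟩ := Nat.exists_eq_succ_of_ne_zero hk
    have hzero : k • g l + g i = 0 := by
      apply add_left_cancel (a := g l)
      rw [add_zero, ← add_assoc, ← succ_nsmul', h]
    exact hg.ne_zero hi (eq_zero_of_add_left hzero)
  · have hmem {n : ι} (hn : P n) (hnj : n ≠ j) :
        g n ∈ AddSubmonoid.closure {x | ∃ j', P j' ∧ j' ≠ j ∧ x = g j'} :=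
      AddSubmonoid.subset_closure ⟨n, hn, hnj, rfl⟩
    exact hg j hj (h ▸ add_mem (nsmul_mem (hmem hl hlj) k) (hmem hi hij))

theorem IsIrredundant.nsmul_add_ne_nsmul_add [IsCancelAdd A] [Subsingleton (AddUnits A)]
    (hg : IsIrredundant P g) {l i j : ι} (hl : P l) (hi : P i) (hj : P j) (hij : i ≠ j)
    {M N : ℕ} (hMN : M ≠ N) : N • g l + g i ≠ M • g l + g j := by
  wlog hlt : M < N generalizing i j M N
  · exact fun h => this hj hi hij.symm hMN.symm (hMN.lt_or_gt.resolve_left hlt) h.symm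
  obtain ⟨k, hk, rfl⟩ : ∃ k, k ≠ 0 ∧ N = M + k := ⟨N - M, by omega, by omega⟩
  intro h
  rw [add_nsmul, add_assoc] at h
  exact hg.nsmul_add_ne hl hi hj hij hk (add_left_cancel h)

end Irredundant

theorem weights_distinct_general
    (p : ℕ)
    (m : ℕ → ℕ)
    (hmin : ∀ i ≤ p, m i ∉ AddSubmonoid.closure {x : ℕ | ∃ j ≤ p, j ≠ i ∧ x = m j})
    (l M N i j : ℕ) (hl : l = 0 ∨ l = p) (hMN : M ≠ N)
    (hi : i ≤ p) (hj : j ≤ p) (hij : i ≠ j) :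
    N * m l + m i ≠ M * m l + m j := by
  have hlp : l ≤ p := by rcases hl with rfl | rfl <;> omega
  simpa only [smul_eq_mul] using
    IsIrredundant.nsmul_add_ne_nsmul_add (P := (· ≤ p)) hmin hlp hi hj hij hMN

/-- For `l ∈ {0, p}`, non-negative integers `M ≠ N`, and `i ≠ j` in `{0,…,p}`,
one has `N·m_l + m_i ≠ M·m_l + m_j`. -/
theorem weights_distinct
    (p d a b : ℕ) (hp : 2 ≤ p) (hd : 1 ≤ d) (ha : 1 ≤ a) (hb1 : 1 ≤ b) (hbp : b ≤ p)
    (m : ℕ → ℕ) (hm : ∀ i, m i = a * p + b + i * d)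
    (hgcd : Nat.gcd (m 0) d = 1)
    (hmin : ∀ i ≤ p, m i ∉ AddSubmonoid.closure {x : ℕ | ∃ j ≤ p, j ≠ i ∧ x = m j})
    (l M N i j : ℕ) (hl : l = 0 ∨ l = p) (hMN : M ≠ N)
    (hi : i ≤ p) (hj : j ≤ p) (hij : i ≠ j) :
    N * m l + m i ≠ M * m l + m j :=
  weights_distinct_general p m hmin l M N i j hl hMN hi hj hij
end

section
/- Let m ≥ 0 and j ∈ {1,…,p−1}. If either (i ∈ {1,…,p−1} and 1 ≤ n ≤ a−1) or (i ∈ {1,…,b−1} and 1 ≤ n ≤ a), then n·m_p + m_i ≠ m·m_0 + m_j; equivalently, the binomial X_0^m·X_j − X_p^n·X_i does not belong to ℘. -/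
/-! Since `m_k = m_0 + k d`, a relation `N m_p + m_i = M m_0 + m_j` amounts to
`(M - N) m_0 = (N p + i - j) d`. As `gcd(m_0, d) = 1`, this forces `m_0 ∣ N p + i - j`, which is
impossible because the hypotheses give `0 < N p + i - j < m_0`. A binomial of monomials lies in `℘`
exactly when both monomials have the same weight `ω`. -/

open MvPolynomial
open Fin.NatCast

/-- The defining ideal `℘` of the monomial curve: the kernel of the `K`-algebra map
`K[X_0,…,X_p] → K[T]`, `X_i ↦ T^{m_i}`. -/
noncomputable def curveIdeal (K : Type*) [Field K] (p : ℕ) (m : ℕ → ℕ) :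
    Ideal (MvPolynomial (Fin (p + 1)) K) :=
  RingHom.ker (MvPolynomial.aeval (R := K)
    (fun k : Fin (p + 1) => (Polynomial.X : Polynomial K) ^ m (k : ℕ))).toRingHom

/-- The weight `ω(X^s)`. -/
def curveWeight {p : ℕ} (m : ℕ → ℕ) (s : Fin (p + 1) →₀ ℕ) : ℕ :=
  s.sum fun k e => e * m k

section CurveIdeal

variable {K : Type*} [Field K] {p : ℕ} (m : ℕ → ℕ)

lemma aeval_monomial_one (s : Fin (p + 1) →₀ ℕ) :
    aeval (R := K) (fun k : Fin (p + 1) => (Polynomial.X : Polynomial K) ^ m k) (monomial s 1) =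
      Polynomial.X ^ curveWeight m s := by
  rw [aeval_monomial, map_one, one_mul, Finsupp.prod, curveWeight, Finsupp.sum,
    ← Finset.prod_pow_eq_pow_sum]
  simp only [← pow_mul, mul_comm]

lemma monomial_sub_monomial_mem_curveIdeal_iff (s t : Fin (p + 1) →₀ ℕ) :
    monomial s (1 : K) - monomial t 1 ∈ curveIdeal K p m ↔ curveWeight m s = curveWeight m t := by
  rw [curveIdeal, RingHom.mem_ker, AlgHom.toRingHom_eq_coe, RingHom.coe_coe, map_sub,
    aeval_monomial_one, aeval_monomial_one, sub_eq_zero, Polynomial.X_pow_eq_monomial,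
    Polynomial.X_pow_eq_monomial, Polynomial.monomial_left_inj one_ne_zero]

lemma X_pow_mul_X_eq_monomial (u v : Fin (p + 1)) (M : ℕ) :
    (X u ^ M * X v : MvPolynomial (Fin (p + 1)) K) =
      monomial (Finsupp.single u M + Finsupp.single v 1) 1 := by
  rw [X_pow_eq_monomial, X, monomial_mul, one_mul]

lemma curveWeight_single_add_single (u v : Fin (p + 1)) (M : ℕ) :
    curveWeight m (Finsupp.single u M + Finsupp.single v 1) = M * m u + m v := by
  rw [curveWeight, Finsupp.sum_add_index' (fun _ => zero_mul _) (fun _ _ _ => add_mul _ _ _),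
    Finsupp.sum_single_index (zero_mul _), Finsupp.sum_single_index (zero_mul _), one_mul]

lemma X_pow_mul_X_sub_mem_curveIdeal_iff (u v w x : Fin (p + 1)) (M N : ℕ) :
    X u ^ M * X v - X w ^ N * X x ∈ curveIdeal K p m ↔ M * m u + m v = N * m w + m x := by
  rw [X_pow_mul_X_eq_monomial, X_pow_mul_X_eq_monomial, monomial_sub_monomial_mem_curveIdeal_iff,
    curveWeight_single_add_single, curveWeight_single_add_single]

end CurveIdeal

lemma eq_zero_of_mul_add_mul_eq_mul_of_coprime {c d N M e : ℕ} (hcd : c.Coprime d)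
    (h : N * c + e * d = M * c) (he : e < c) : e = 0 := by
  have hdvd : c ∣ e * d := (Nat.dvd_add_right (dvd_mul_left c N)).mp (h ▸ dvd_mul_left c M)
  exact Nat.eq_zero_of_dvd_of_lt (hcd.dvd_of_dvd_mul_right hdvd) he

lemma arithSeq_mul_add_ne {c d p N M i j : ℕ} {m : ℕ → ℕ} (hm : ∀ k, m k = c + k * d)
    (hcd : c.Coprime d) (hlow : j < N * p + i) (hup : N * p + i < c + j) :
    N * m p + m i ≠ M * m 0 + m j := by
  intro h
  obtain ⟨e, he⟩ := Nat.exists_eq_add_of_lt hlow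
  simp only [hm, zero_mul, add_zero] at h
  have hrel : N * c + (e + 1) * d = M * c := by
    have := congrArg (· * d) he
    nlinarith
  exact absurd (eq_zero_of_mul_add_mul_eq_mul_of_coprime hcd hrel (by omega)) (Nat.succ_ne_zero e)

theorem binomial_not_in_curveIdeal_general
    (K : Type*) [Field K]
    (p d a b : ℕ) (hbp : b ≤ p)
    (m : ℕ → ℕ) (hm : ∀ i, m i = a * p + b + i * d)
    (hgcd : Nat.gcd (m 0) d = 1)
    (M N i j : ℕ) (hjp : j < p)
    (hcase : (1 ≤ i ∧ i < p ∧ 1 ≤ N ∧ N < a) ∨ (1 ≤ i ∧ i < b ∧ 1 ≤ N ∧ N ≤ a)) :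
    N * m p + m i ≠ M * m 0 + m j ∧
      (X (0 : Fin (p + 1))) ^ M * X ((j : ℕ) : Fin (p + 1)) -
        (X ((p : ℕ) : Fin (p + 1))) ^ N * X ((i : ℕ) : Fin (p + 1)) ∉ curveIdeal K p m := by
  have hcd : (a * p + b).Coprime d := by simpa [hm] using hgcd
  have hip : i < p := by omega
  have hlow : j < N * p + i := by
    rcases hcase with ⟨hi, -, hN, -⟩ | ⟨hi, -, hN, -⟩ <;> nlinarith
  have hup : N * p + i < a * p + b + j := by
    rcases hcase with ⟨-, -, -, hNa⟩ | ⟨-, hib, -, hNa⟩ <;> nlinarith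
  have hne := arithSeq_mul_add_ne (M := M) hm hcd hlow hup
  refine ⟨hne, fun hmem => hne ?_⟩
  rw [X_pow_mul_X_sub_mem_curveIdeal_iff, Fin.val_cast_of_lt (by omega : j < p + 1),
    Fin.val_cast_of_lt (by omega : i < p + 1), Fin.val_cast_of_lt (by omega : p < p + 1)] at hmem
  exact hmem.symm

/-- For `m ≥ 0`, `j ∈ {1,…,p−1}`, and either (`i ∈ {1,…,p−1}` and `1 ≤ n ≤ a−1`)
or (`i ∈ {1,…,b−1}` and `1 ≤ n ≤ a`), one has `n·m_p + m_i ≠ m·m_0 + m_j`; equivalently the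
binomial `X_0^m·X_j − X_p^n·X_i` does not belong to `℘`. -/
theorem binomial_not_in_curveIdeal
    (K : Type*) [Field K]
    (p d a b : ℕ) (hp : 2 ≤ p) (hd : 1 ≤ d) (ha : 1 ≤ a) (hb1 : 1 ≤ b) (hbp : b ≤ p)
    (m : ℕ → ℕ) (hm : ∀ i, m i = a * p + b + i * d)
    (hgcd : Nat.gcd (m 0) d = 1)
    (hmin : ∀ i ≤ p, m i ∉ AddSubmonoid.closure {x : ℕ | ∃ j ≤ p, j ≠ i ∧ x = m j})
    (M N i j : ℕ) (hj1 : 1 ≤ j) (hjp : j < p)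
    (hcase : (1 ≤ i ∧ i < p ∧ 1 ≤ N ∧ N < a) ∨ (1 ≤ i ∧ i < b ∧ 1 ≤ N ∧ N ≤ a)) :
    N * m p + m i ≠ M * m 0 + m j ∧
      (X (0 : Fin (p + 1))) ^ M * X ((j : ℕ) : Fin (p + 1)) -
        (X ((p : ℕ) : Fin (p + 1))) ^ N * X ((i : ℕ) : Fin (p + 1)) ∉ curveIdeal K p m :=
  binomial_not_in_curveIdeal_general K p d a b hbp m hm hgcd M N i j hjp hcase
end

section
/- Let m ≥ 0 and n ∈ {0,…,a}, and let g = X_0^m·X_p^n. Then g − f ∉ ℘ (equivalently m·m_0 + n·m_p ≠ ω(f)) for each of the following monomials f: (1) f = X_p^l·X_i with 1 ≤ l ≤ a−1 and i ∈ {1,…,p−1}; (2) f = X_0^l·X_i with l ≥ 0 and i ∈ {1,…,p−1}; (3) f = X_p^l·X_i with 1 ≤ l ≤ a and i ∈ {1,…,b−1}. -/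
/-! The weights satisfy `m_i = m_0 + i·d`, so an equality of weights
`M·m_0 + N·m_p = k·m_0 + s·d` gives `m_0 (M + N - k) = (s - N p) d`. As `m_0` is prime to `d`,
it divides `s - N p`, which is smaller than `m_0` in absolute value for the monomials at hand;
hence `s = N p`, which is impossible because `p ∤ s`. -/

open MvPolynomial
open Fin.NatCast

theorem X_pow_mul_X_pow_sub_mem_curveIdeal_iff (K : Type*) [Field K] (p : ℕ) (m : ℕ → ℕ)
    (u v w z : Fin (p + 1)) (M N k n : ℕ) :
    X u ^ M * X v ^ N - X w ^ k * X z ^ n ∈ curveIdeal K p m ↔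
      M * m u + N * m v = k * m w + n * m z := by
  simp only [curveIdeal, RingHom.mem_ker, AlgHom.toRingHom_eq_coe, RingHom.coe_coe, map_sub,
    map_mul, map_pow, aeval_X, ← pow_mul, ← pow_add, sub_eq_zero]
  constructor
  · intro h
    simpa [mul_comm] using congrArg Polynomial.natDegree h
  · intro h
    rw [mul_comm (m u), mul_comm (m v), mul_comm (m w), mul_comm (m z), h]

theorem mul_add_mul_ne_of_not_dvd {m₀ d p M N k s : ℕ} (hcop : m₀.Coprime d) (hN : N * p < m₀)
    (hs : s < m₀) (hps : ¬p ∣ s) : M * m₀ + N * (m₀ + p * d) ≠ k * m₀ + s * d := by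
  intro h
  have hℤ : (M * m₀ + N * (m₀ + p * d) : ℤ) = k * m₀ + s * d := by exact_mod_cast h
  have hlin : (m₀ : ℤ) * (M + N - k) = (s - N * p) * d := by linear_combination hℤ
  have hdvd : (m₀ : ℤ) ∣ s - N * p :=
    (Nat.isCoprime_iff_coprime.mpr hcop).dvd_of_dvd_mul_right ⟨_, hlin.symm⟩
  have hzero : (s : ℤ) - N * p = 0 := Int.eq_zero_of_abs_lt_dvd hdvd (by rw [abs_lt]; omega)
  exact hps ⟨N, by linarith⟩

theorem monomial_differences_not_in_curveIdeal_general
    (K : Type*) [Field K]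
    (p d a b : ℕ) (ha : 1 ≤ a) (hb1 : 1 ≤ b) (hbp : b ≤ p)
    (m : ℕ → ℕ) (hm : ∀ i, m i = a * p + b + i * d)
    (hgcd : Nat.gcd (m 0) d = 1)
    (M N : ℕ) (hN : N ≤ a) :
    (∀ l i : ℕ, 1 ≤ l → l < a → 1 ≤ i → i < p →
      M * m 0 + N * m p ≠ l * m p + m i ∧
        (X (0 : Fin (p + 1))) ^ M * (X ((p : ℕ) : Fin (p + 1))) ^ N -
          (X ((p : ℕ) : Fin (p + 1))) ^ l * X ((i : ℕ) : Fin (p + 1)) ∉ curveIdeal K p m) ∧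
    (∀ l i : ℕ, 1 ≤ i → i < p →
      M * m 0 + N * m p ≠ l * m 0 + m i ∧
        (X (0 : Fin (p + 1))) ^ M * (X ((p : ℕ) : Fin (p + 1))) ^ N -
          (X (0 : Fin (p + 1))) ^ l * X ((i : ℕ) : Fin (p + 1)) ∉ curveIdeal K p m) ∧
    (∀ l i : ℕ, 1 ≤ l → l ≤ a → 1 ≤ i → i < b →
      M * m 0 + N * m p ≠ l * m p + m i ∧
        (X (0 : Fin (p + 1))) ^ M * (X ((p : ℕ) : Fin (p + 1))) ^ N -
          (X ((p : ℕ) : Fin (p + 1))) ^ l * X ((i : ℕ) : Fin (p + 1)) ∉ curveIdeal K p m) := by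
  have hm' (i : ℕ) : m i = m 0 + i * d := by rw [hm, hm 0]; ring
  have hap : a * p < m 0 := by rw [hm 0]; omega
  have hNp : N * p < m 0 := (Nat.mul_le_mul_right p hN).trans_lt hap
  have hval {j : ℕ} (hj : j ≤ p) : (((j : ℕ) : Fin (p + 1)) : ℕ) = j :=
    Fin.val_cast_of_lt (Nat.lt_succ_of_le hj)
  have hmem {w l i : ℕ} (hw : w ≤ p) (hi : i ≤ p) (hne : M * m 0 + N * m p ≠ l * m w + m i) :
      M * m 0 + N * m p ≠ l * m w + m i ∧
        X (0 : Fin (p + 1)) ^ M * X ((p : ℕ) : Fin (p + 1)) ^ N -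
          X ((w : ℕ) : Fin (p + 1)) ^ l * X ((i : ℕ) : Fin (p + 1)) ∉ curveIdeal K p m := by
    refine ⟨hne, ?_⟩
    rw [← pow_one (X ((i : ℕ) : Fin (p + 1))), X_pow_mul_X_pow_sub_mem_curveIdeal_iff]
    simpa [hval hw, hval hi, hval le_rfl] using hne
  have hweight {k s : ℕ} (hs : s < m 0) (hps : ¬p ∣ s) :
      M * m 0 + N * m p ≠ k * m 0 + s * d := by
    rw [hm' p]; exact mul_add_mul_ne_of_not_dvd hgcd hNp hs hps
  have hnot_dvd {l i : ℕ} (hi : 1 ≤ i) (hip : i < p) : ¬p ∣ l * p + i :=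
    (Nat.dvd_add_right (dvd_mul_left p l)).not.mpr (Nat.not_dvd_of_pos_of_lt hi hip)
  refine ⟨fun l i _ hla hi hip => ?_, fun l i hi hip => ?_, fun l i _ hla hi hib => ?_⟩
  · refine hmem le_rfl hip.le ?_
    rw [show l * m p + m i = (l + 1) * m 0 + (l * p + i) * d by rw [hm' p, hm' i]; ring]
    exact hweight (by nlinarith) (hnot_dvd hi hip)
  · refine hmem (Nat.zero_le p) hip.le ?_
    rw [show l * m 0 + m i = (l + 1) * m 0 + i * d by rw [hm' i]; ring]
    exact hweight (by nlinarith) (Nat.not_dvd_of_pos_of_lt hi hip)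
  · refine hmem le_rfl (by omega) ?_
    rw [show l * m p + m i = (l + 1) * m 0 + (l * p + i) * d by rw [hm' p, hm' i]; ring]
    have hlp := Nat.mul_le_mul_right p hla
    exact hweight (by rw [hm 0]; omega) (hnot_dvd hi (by omega))

/-- For `M ≥ 0`, `N ∈ {0,…,a}` and `g = X_0^M·X_p^N`, one has `g − f ∉ ℘`
(equivalently `M·m_0 + N·m_p ≠ ω(f)`) for each monomial `f` of the three listed families. -/
theorem monomial_differences_not_in_curveIdeal
    (K : Type*) [Field K]
    (p d a b : ℕ) (hp : 2 ≤ p) (hd : 1 ≤ d) (ha : 1 ≤ a) (hb1 : 1 ≤ b) (hbp : b ≤ p)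
    (m : ℕ → ℕ) (hm : ∀ i, m i = a * p + b + i * d)
    (hgcd : Nat.gcd (m 0) d = 1)
    (hmin : ∀ i ≤ p, m i ∉ AddSubmonoid.closure {x : ℕ | ∃ j ≤ p, j ≠ i ∧ x = m j})
    (M N : ℕ) (hN : N ≤ a) :
    (∀ l i : ℕ, 1 ≤ l → l < a → 1 ≤ i → i < p →
      M * m 0 + N * m p ≠ l * m p + m i ∧
        (X (0 : Fin (p + 1))) ^ M * (X ((p : ℕ) : Fin (p + 1))) ^ N -
          (X ((p : ℕ) : Fin (p + 1))) ^ l * X ((i : ℕ) : Fin (p + 1)) ∉ curveIdeal K p m) ∧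
    (∀ l i : ℕ, 1 ≤ i → i < p →
      M * m 0 + N * m p ≠ l * m 0 + m i ∧
        (X (0 : Fin (p + 1))) ^ M * (X ((p : ℕ) : Fin (p + 1))) ^ N -
          (X (0 : Fin (p + 1))) ^ l * X ((i : ℕ) : Fin (p + 1)) ∉ curveIdeal K p m) ∧
    (∀ l i : ℕ, 1 ≤ l → l ≤ a → 1 ≤ i → i < b →
      M * m 0 + N * m p ≠ l * m p + m i ∧
        (X (0 : Fin (p + 1))) ^ M * (X ((p : ℕ) : Fin (p + 1))) ^ N -
          (X ((p : ℕ) : Fin (p + 1))) ^ l * X ((i : ℕ) : Fin (p + 1)) ∉ curveIdeal K p m) :=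
  monomial_differences_not_in_curveIdeal_general K p d a b ha hb1 hbp m hm hgcd M N hN
end

section
/- The ideal ℘ equals the ideal of R generated by the set 𝒢' = {φ(i,j) : 1 ≤ i ≤ j ≤ p−1} ∪ {ψ(b,i) : 0 ≤ i ≤ p−b}. -/
open MvPolynomial
open Fin.NatCast

/-- `ε(i,j) = i + j` if `i + j < p`, and `ε(i,j) = p` if `i + j ≥ p`. -/
def eps (p i j : ℕ) : ℕ := if i + j < p then i + j else p

/-- The binomial `φ(i,j) = X_i·X_j − X_{ε(i,j)}·X_{i+j−ε(i,j)}`. -/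
noncomputable def phi (K : Type*) [Field K] (p i j : ℕ) : MvPolynomial (Fin (p + 1)) K :=
  X ((i : ℕ) : Fin (p + 1)) * X ((j : ℕ) : Fin (p + 1)) -
    X ((eps p i j : ℕ) : Fin (p + 1)) * X ((i + j - eps p i j : ℕ) : Fin (p + 1))

/-- The binomial `ψ(b,i) = X_{b+i}·X_p^a − X_i·X_0^{a+d}`. -/
noncomputable def psi (K : Type*) [Field K] (p a b d i : ℕ) : MvPolynomial (Fin (p + 1)) K :=
  X ((b + i : ℕ) : Fin (p + 1)) * (X ((p : ℕ) : Fin (p + 1))) ^ a -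
    X ((i : ℕ) : Fin (p + 1)) * (X (0 : Fin (p + 1))) ^ (a + d)

/-- The set `𝒢' = {φ(i,j) : 1 ≤ i ≤ j ≤ p−1} ∪ {ψ(b,i) : 0 ≤ i ≤ p−b}`. -/
noncomputable def Gset (K : Type*) [Field K] (p a b d : ℕ) :
    Set (MvPolynomial (Fin (p + 1)) K) :=
  {f | ∃ i j : ℕ, 1 ≤ i ∧ i ≤ j ∧ j < p ∧ f = phi K p i j} ∪
    {f | ∃ i : ℕ, i ≤ p - b ∧ f = psi K p a b d i}

/-!
For `w = j + v p` with `1 ≤ j ≤ p` let `Y_w = X_j X_p^v`, and `Y_0 = 1`; then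
`η(X_0^u Y_w) = T^{(u + ⌈w/p⌉) m₀ + w d}`. Modulo the ideal `(𝒢')`, the binomials `φ`
turn `Y_w X_k` into `X_0^e Y_{w+k}` and, once `w ≥ m₀`, the binomials `ψ` turn `Y_w` into
`X_0^e Y_{w-m₀}`. Hence the monomials `X_0^u Y_w` with `w < m₀` span `R` modulo `(𝒢')`.
As `gcd(m₀, d) = 1`, their images are pairwise distinct powers of `T`, so linearly
independent, and therefore no nonzero element of their span lies in `℘`.
-/

theorem LinearMap.ker_eq_of_span_sup_eq_top {R M M' ι : Type*} [Ring R] [AddCommGroup M]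
    [AddCommGroup M'] [Module R M] [Module R M'] {f : M →ₗ[R] M'} {N : Submodule R M}
    {v : ι → M} (hN : N ≤ ker f) (hspan : Submodule.span R (Set.range v) ⊔ N = ⊤)
    (hv : LinearIndependent R (f ∘ v)) : ker f = N := by
  refine le_antisymm (fun x hx => ?_) hN
  obtain ⟨y, hy, z, hz, rfl⟩ := Submodule.mem_sup.mp (hspan ▸ Submodule.mem_top (x := x))
  have hfy : y ∈ ker f := by
    rw [mem_ker] at hx ⊢
    rwa [map_add, mem_ker.mp (hN hz), add_zero] at hx
  rw [Submodule.disjoint_def.mp (Submodule.range_ker_disjoint hv) y hy hfy, zero_add]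
  exact hz

theorem Submodule.mem_sup_of_smodEq {R M : Type*} [Ring R] [AddCommGroup M] [Module R M]
    {N U : Submodule R M} {x y : M} (hxy : x ≡ y [SMOD U]) (hy : y ∈ N ⊔ U) :
    x ∈ N ⊔ U := by
  rw [← sub_add_cancel x y]
  exact add_mem (mem_sup_right (SModEq.sub_mem.mp hxy)) hy

theorem Submodule.mul_mem_span_sup_restrictScalars {R A ι : Type*} [CommSemiring R]
    [CommRing A] [Algebra R A] {I : Ideal A} {v : ι → A} {c x : A}
    (hc : ∀ t, c * v t ∈ span R (Set.range v) ⊔ I.restrictScalars R)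
    (hx : x ∈ span R (Set.range v) ⊔ I.restrictScalars R) :
    c * x ∈ span R (Set.range v) ⊔ I.restrictScalars R := by
  have hspan : span R (Set.range v) ≤
      (span R (Set.range v) ⊔ I.restrictScalars R).comap (LinearMap.mulLeft R c) :=
    span_le.mpr (Set.range_subset_iff.mpr hc)
  obtain ⟨y, hy, z, hz, rfl⟩ := mem_sup.mp hx
  rw [mul_add]
  exact add_mem (hspan hy) (mem_sup_right (I.mul_mem_left c hz))

theorem MvPolynomial.eq_top_of_one_mem_of_X_mul_mem {σ R : Type*} [CommSemiring R]
    {M : Submodule R (MvPolynomial σ R)} (h1 : 1 ∈ M) (hX : ∀ i, ∀ x ∈ M, X i * x ∈ M) :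
    M = ⊤ := by
  refine Submodule.eq_top_iff'.mpr fun f => ?_
  induction f using MvPolynomial.induction_on with
  | C r => simpa [smul_eq_C_mul] using M.smul_mem r h1
  | add f g hf hg => exact M.add_mem hf hg
  | mul_X f i hf => rw [mul_comm]; exact hX i f hf

theorem Nat.eq_and_eq_of_mul_add_mul_eq {n d U U' W W' : ℕ} (hnd : n.Coprime d) (hW : W < n)
    (hW' : W' < n) (h : U * n + W * d = U' * n + W' * d) : U = U' ∧ W = W' := by
  have hmod : W * d ≡ W' * d [MOD n] := by
    simpa [Nat.ModEq, Nat.add_comm, Nat.add_mul_mod_self_right] using congrArg (· % n) h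
  obtain rfl : W = W' := (hmod.cancel_right_of_coprime hnd).eq_of_lt_of_lt hW hW'
  exact ⟨Nat.eq_of_mul_eq_mul_right (by omega) (Nat.add_right_cancel h), rfl⟩

namespace MonomialCurve

variable {K : Type*} [Field K] {p : ℕ}

theorem exists_eq_add_mul {w : ℕ} (hp : 0 < p) (hw : 0 < w) :
    ∃ j v, 1 ≤ j ∧ j ≤ p ∧ w = j + v * p := by
  refine ⟨(w - 1) % p + 1, (w - 1) / p, by omega, Nat.mod_lt _ hp, ?_⟩
  have := Nat.mod_add_div' (w - 1) p
  omega

variable (K p) in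
/-- `X_j X_p^v` where `w = j + v p` with `1 ≤ j ≤ p`; `1` for `w = 0`. -/
noncomputable def normalMonomial (w : ℕ) : MvPolynomial (Fin (p + 1)) K :=
  if w = 0 then 1
  else X (((w - 1) % p + 1 : ℕ) : Fin (p + 1)) * X (p : Fin (p + 1)) ^ ((w - 1) / p)

theorem normalMonomial_zero : normalMonomial K p 0 = 1 := if_pos rfl

theorem normalMonomial_add_mul {j : ℕ} (hj : 1 ≤ j) (hjp : j ≤ p) (v : ℕ) :
    normalMonomial K p (j + v * p) = X (j : Fin (p + 1)) * X (p : Fin (p + 1)) ^ v := by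
  have hp : 0 < p := by omega
  rw [normalMonomial, if_neg (by omega), show j + v * p - 1 = j - 1 + v * p by omega,
    Nat.add_mul_mod_self_right, Nat.mod_eq_of_lt (by omega), Nat.add_mul_div_right _ _ hp,
    Nat.div_eq_of_lt (by omega), Nat.sub_add_cancel hj, zero_add]

theorem normalMonomial_mul (hp : 0 < p) (n : ℕ) :
    normalMonomial K p (n * p) = X (p : Fin (p + 1)) ^ n := by
  cases n with
  | zero => rw [zero_mul, normalMonomial_zero, pow_zero]
  | succ n =>
    rw [show (n + 1) * p = p + n * p by ring, normalMonomial_add_mul hp le_rfl, pow_succ']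

theorem normalMonomial_add_mul_of_pos (hp : 0 < p) {w : ℕ} (hw : 0 < w) (n : ℕ) :
    normalMonomial K p (w + n * p) = normalMonomial K p w * X (p : Fin (p + 1)) ^ n := by
  obtain ⟨j, v, hj, hjp, rfl⟩ := exists_eq_add_mul hp hw
  rw [add_assoc, ← add_mul, normalMonomial_add_mul hj hjp, normalMonomial_add_mul hj hjp,
    pow_add, mul_assoc]

theorem exists_X_mul_X_pow_eq (hp : 0 < p) {i : ℕ} (hi : i ≤ p) (n : ℕ) :
    ∃ e, X (i : Fin (p + 1)) * X (p : Fin (p + 1)) ^ n =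
      X (0 : Fin (p + 1)) ^ e * normalMonomial K p (i + n * p) := by
  rcases Nat.eq_zero_or_pos i with rfl | hi0
  · exact ⟨1, by rw [zero_add, normalMonomial_mul hp, pow_one, Nat.cast_zero]⟩
  · exact ⟨0, by rw [pow_zero, one_mul, normalMonomial_add_mul hi0 hi]⟩

variable {a b d : ℕ}

theorem phi_comm (i j : ℕ) : phi K p i j = phi K p j i := by
  unfold phi eps
  rw [Nat.add_comm j i, mul_comm (X (j : Fin (p + 1)))]

theorem phi_mem_span_Gset {j k : ℕ} (hj : j ≤ p) (hk : k ≤ p) :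
    phi K p j k ∈ Ideal.span (Gset K p a b d) := by
  by_cases hgen : 1 ≤ j ∧ j < p ∧ 1 ≤ k ∧ k < p
  · rcases le_total j k with h | h
    · exact Ideal.subset_span (Or.inl ⟨j, k, hgen.1, h, hgen.2.2.2, rfl⟩)
    · rw [phi_comm]
      exact Ideal.subset_span (Or.inl ⟨k, j, hgen.2.2.1, h, hgen.2.1, rfl⟩)
  · -- outside the range of `𝒢'`, `φ(j,k)` is the zero binomial
    have : (eps p j k = j ∧ j + k - eps p j k = k) ∨
        (eps p j k = k ∧ j + k - eps p j k = j) := by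
      unfold eps; split_ifs <;> omega
    rcases this with ⟨h₁, h₂⟩ | ⟨h₁, h₂⟩ <;> rw [phi, h₂, h₁]
    · rw [sub_self]; exact zero_mem _
    · rw [mul_comm, sub_self]; exact zero_mem _

theorem psi_mem_span_Gset {i : ℕ} (hi : i ≤ p - b) :
    psi K p a b d i ∈ Ideal.span (Gset K p a b d) :=
  Ideal.subset_span (Or.inr ⟨i, hi, rfl⟩)

theorem exists_X_mul_X_smodEq (hp : 0 < p) {j k : ℕ} (hj : j ≤ p) (hk : k ≤ p) :
    ∃ e, X (j : Fin (p + 1)) * X (k : Fin (p + 1)) ≡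
      X (0 : Fin (p + 1)) ^ e * normalMonomial K p (j + k) [SMOD Ideal.span (Gset K p a b d)] := by
  have hphi := SModEq.sub_mem.mpr (phi_mem_span_Gset (K := K) (a := a) (b := b) (d := d) hj hk)
  unfold eps at hphi
  split_ifs at hphi with h
  · obtain ⟨e, he⟩ := exists_X_mul_X_pow_eq (K := K) hp h.le 0
    rw [pow_zero, mul_one, zero_mul, add_zero] at he
    refine ⟨e + 1, hphi.trans ?_⟩
    rw [Nat.sub_self, Nat.cast_zero, mul_comm, pow_succ', mul_assoc, he]
  · obtain ⟨e, he⟩ := exists_X_mul_X_pow_eq (K := K) hp (i := j + k - p) (by omega) 1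
    refine ⟨e, hphi.trans ?_⟩
    rw [mul_comm, ← pow_one (X (p : Fin (p + 1))), he, one_mul, Nat.sub_add_cancel (by omega)]

theorem exists_normalMonomial_mul_X_smodEq (hp : 0 < p) (w : ℕ) {k : ℕ} (hk : k ≤ p) :
    ∃ e, normalMonomial K p w * X (k : Fin (p + 1)) ≡
      X (0 : Fin (p + 1)) ^ e * normalMonomial K p (w + k) [SMOD Ideal.span (Gset K p a b d)] := by
  rcases Nat.eq_zero_or_pos w with rfl | hw
  · obtain ⟨e, he⟩ := exists_X_mul_X_pow_eq (K := K) hp hk 0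
    rw [pow_zero, mul_one, zero_mul, add_zero] at he
    exact ⟨e, by rw [normalMonomial_zero, one_mul, zero_add, he]⟩
  · obtain ⟨j, v, hj, hjp, rfl⟩ := exists_eq_add_mul hp hw
    obtain ⟨e, he⟩ := exists_X_mul_X_smodEq (K := K) (a := a) (b := b) (d := d) hp hjp hk
    refine ⟨e, ?_⟩
    calc normalMonomial K p (j + v * p) * X (k : Fin (p + 1))
        = X (j : Fin (p + 1)) * X (k : Fin (p + 1)) * X (p : Fin (p + 1)) ^ v := by
          rw [normalMonomial_add_mul hj hjp]; ring
      _ ≡ X 0 ^ e * normalMonomial K p (j + k) * X (p : Fin (p + 1)) ^ v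
          [SMOD Ideal.span (Gset K p a b d)] := he.mul SModEq.rfl
      _ = X 0 ^ e * normalMonomial K p (j + v * p + k) := by
          rw [mul_assoc, ← normalMonomial_add_mul_of_pos hp (by omega), add_right_comm]

theorem exists_normalMonomial_smodEq_sub (hb : 0 < b) (hbp : b ≤ p) {w : ℕ}
    (hw : a * p + b ≤ w) :
    ∃ e, normalMonomial K p w ≡ X (0 : Fin (p + 1)) ^ e * normalMonomial K p (w - (a * p + b))
      [SMOD Ideal.span (Gset K p a b d)] := by
  have hp : 0 < p := by omega
  have hpsi {i : ℕ} (hi : i ≤ p - b) :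
      X ((b + i : ℕ) : Fin (p + 1)) * X (p : Fin (p + 1)) ^ a ≡
        X (i : Fin (p + 1)) * X 0 ^ (a + d) [SMOD Ideal.span (Gset K p a b d)] :=
    SModEq.sub_mem.mpr (psi_mem_span_Gset hi)
  obtain ⟨j, v, hj, hjp, rfl⟩ := exists_eq_add_mul hp (by omega : 0 < w)
  rcases le_or_gt b j with hbj | hjb
  · obtain ⟨i, rfl⟩ := Nat.exists_eq_add_of_le hbj
    have hav : a ≤ v := by
      by_contra! h
      have := Nat.mul_le_mul_right p (Nat.succ_le_of_lt h)
      rw [Nat.succ_mul] at this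
      omega
    obtain ⟨n, rfl⟩ := Nat.exists_eq_add_of_le hav
    obtain ⟨e, he⟩ := exists_X_mul_X_pow_eq (K := K) hp (i := i) (by omega) n
    refine ⟨a + d + e, ?_⟩
    calc normalMonomial K p (b + i + (a + n) * p)
        = X ((b + i : ℕ) : Fin (p + 1)) * X (p : Fin (p + 1)) ^ a *
            X (p : Fin (p + 1)) ^ n := by
          rw [normalMonomial_add_mul hj hjp, pow_add, mul_assoc]
      _ ≡ X (i : Fin (p + 1)) * X 0 ^ (a + d) * X (p : Fin (p + 1)) ^ n
          [SMOD Ideal.span (Gset K p a b d)] := (hpsi (by omega)).mul SModEq.rfl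
      _ = X 0 ^ (a + d + e) * normalMonomial K p (b + i + (a + n) * p - (a * p + b)) := by
          rw [show b + i + (a + n) * p - (a * p + b) = i + n * p by rw [add_mul]; omega]
          linear_combination X 0 ^ (a + d) * he
  · have hav : a + 1 ≤ v := by
      by_contra! h
      have := Nat.mul_le_mul_right p (Nat.le_of_lt_succ h)
      omega
    obtain ⟨n, rfl⟩ := Nat.exists_eq_add_of_le hav
    obtain ⟨e, he⟩ := exists_X_mul_X_smodEq (K := K) (a := a) (b := b) (d := d) hp hjp
      (Nat.sub_le p b)
    refine ⟨a + d + e, ?_⟩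
    calc normalMonomial K p (j + (a + 1 + n) * p)
        = X ((b + (p - b) : ℕ) : Fin (p + 1)) * X (p : Fin (p + 1)) ^ a *
            (X (j : Fin (p + 1)) * X (p : Fin (p + 1)) ^ n) := by
          rw [normalMonomial_add_mul hj hjp, Nat.add_sub_cancel' hbp]; ring
      _ ≡ X ((p - b : ℕ) : Fin (p + 1)) * X 0 ^ (a + d) *
            (X (j : Fin (p + 1)) * X (p : Fin (p + 1)) ^ n)
          [SMOD Ideal.span (Gset K p a b d)] := (hpsi le_rfl).mul SModEq.rfl
      _ = X 0 ^ (a + d) * (X (j : Fin (p + 1)) * X ((p - b : ℕ) : Fin (p + 1))) *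
            X (p : Fin (p + 1)) ^ n := by ring
      _ ≡ X 0 ^ (a + d) * (X 0 ^ e * normalMonomial K p (j + (p - b))) *
            X (p : Fin (p + 1)) ^ n [SMOD Ideal.span (Gset K p a b d)] :=
          (SModEq.rfl.mul he).mul SModEq.rfl
      _ = X 0 ^ (a + d + e) * normalMonomial K p (j + (a + 1 + n) * p - (a * p + b)) := by
          rw [show j + (a + 1 + n) * p - (a * p + b) = j + (p - b) + n * p by
              rw [add_mul, add_mul, one_mul]; omega,
            normalMonomial_add_mul_of_pos hp (by omega), pow_add]
          ring

variable (K p a b) in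
noncomputable def standardMonomial (t : ℕ × Fin (a * p + b)) : MvPolynomial (Fin (p + 1)) K :=
  X 0 ^ t.1 * normalMonomial K p t.2

theorem X_pow_mul_normalMonomial_mem (hb : 0 < b) (hbp : b ≤ p) (w u : ℕ) :
    X (0 : Fin (p + 1)) ^ u * normalMonomial K p w ∈
      Submodule.span K (Set.range (standardMonomial K p a b)) ⊔
        (Ideal.span (Gset K p a b d)).restrictScalars K := by
  induction w using Nat.strong_induction_on generalizing u with
  | _ w ih =>
    by_cases hw : w < a * p + b
    · exact Submodule.mem_sup_left (Submodule.subset_span ⟨(u, ⟨w, hw⟩), rfl⟩)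
    · obtain ⟨e, he⟩ :=
        exists_normalMonomial_smodEq_sub (K := K) (d := d) hb hbp (not_lt.mp hw)
      refine Submodule.mem_sup_of_smodEq
        ((SModEq.restrictScalars K).mpr (SModEq.rfl.mul he)) ?_
      rw [← mul_assoc, ← pow_add]
      exact ih _ (by omega) _

theorem span_standardMonomial_sup_eq_top (hb : 0 < b) (hbp : b ≤ p) :
    Submodule.span K (Set.range (standardMonomial K p a b)) ⊔
      (Ideal.span (Gset K p a b d)).restrictScalars K = ⊤ := by
  have hp : 0 < p := by omega
  refine MvPolynomial.eq_top_of_one_mem_of_X_mul_mem ?_ fun i x hx => ?_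
  · simpa [normalMonomial_zero] using X_pow_mul_normalMonomial_mem (K := K) (d := d) hb hbp 0 0
  refine Submodule.mul_mem_span_sup_restrictScalars (fun ⟨u, w⟩ => ?_) hx
  obtain ⟨k, hk, rfl⟩ : ∃ k ≤ p, i = (k : Fin (p + 1)) :=
    ⟨i, Fin.is_le i, (Fin.cast_val_eq_self i).symm⟩
  obtain ⟨e, he⟩ :=
    exists_normalMonomial_mul_X_smodEq (K := K) (a := a) (b := b) (d := d) hp w hk
  refine Submodule.mem_sup_of_smodEq ((SModEq.restrictScalars K).mpr ?_)
    (X_pow_mul_normalMonomial_mem hb hbp (w + k) (u + e))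
  calc X (k : Fin (p + 1)) * standardMonomial K p a b (u, w)
      = X 0 ^ u * (normalMonomial K p w * X (k : Fin (p + 1))) := by
        rw [standardMonomial]; ring
    _ ≡ X 0 ^ u * (X 0 ^ e * normalMonomial K p (w + k))
        [SMOD Ideal.span (Gset K p a b d)] := SModEq.rfl.mul he
    _ = X 0 ^ (u + e) * normalMonomial K p (w + k) := by ring

theorem aeval_X_natCast {m : ℕ → ℕ} {k : ℕ} (hk : k ≤ p) :
    aeval (fun i : Fin (p + 1) => (Polynomial.X : Polynomial K) ^ m i)
      (X (k : Fin (p + 1)) : MvPolynomial (Fin (p + 1)) K) =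
      Polynomial.X ^ m k := by
  rw [aeval_X, Fin.val_cast_of_lt (Nat.lt_succ_of_le hk)]

theorem aeval_normalMonomial (hp : 0 < p) {m : ℕ → ℕ} {m₀ : ℕ} (hm : ∀ i, m i = m₀ + i * d)
    (w : ℕ) :
    aeval (fun i : Fin (p + 1) => (Polynomial.X : Polynomial K) ^ m i)
      (normalMonomial K p w) = Polynomial.X ^ (w ⌈/⌉ p * m₀ + w * d) := by
  rcases Nat.eq_zero_or_pos w with rfl | hw
  · simp [normalMonomial_zero]
  · obtain ⟨j, v, hj, hjp, rfl⟩ := exists_eq_add_mul hp hw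
    have hceil : (j + v * p) ⌈/⌉ p = v + 1 := by
      rw [Nat.ceilDiv_eq_add_pred_div, show j + v * p + p - 1 = j - 1 + (v + 1) * p by
        rw [add_mul]; omega, Nat.add_mul_div_right _ _ hp, Nat.div_eq_of_lt (by omega), zero_add]
    rw [normalMonomial_add_mul hj hjp, map_mul, map_pow, aeval_X_natCast hjp,
      aeval_X_natCast le_rfl, ← pow_mul, ← pow_add, hm, hm, hceil]
    congr 1
    ring

theorem linearIndependent_aeval_standardMonomial (hb : 0 < b) (hbp : b ≤ p) {m : ℕ → ℕ}
    (hm : ∀ i, m i = a * p + b + i * d) (hcop : (a * p + b).Coprime d) :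
    LinearIndependent K
      (aeval (fun i : Fin (p + 1) => (Polynomial.X : Polynomial K) ^ m i) ∘
        standardMonomial K p a b) := by
  have hp : 0 < p := by omega
  have hexp : aeval (fun i : Fin (p + 1) => (Polynomial.X : Polynomial K) ^ m i) ∘
      standardMonomial K p a b = Polynomial.basisMonomials K ∘
        fun t => (t.1 + (t.2 : ℕ) ⌈/⌉ p) * (a * p + b) + t.2 * d := by
    funext ⟨u, w⟩
    have hm0 : m 0 = a * p + b := by rw [hm, zero_mul, add_zero]
    simp only [Function.comp_apply, standardMonomial, map_mul, map_pow, aeval_X, Fin.val_zero,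
      aeval_normalMonomial hp hm, Polynomial.coe_basisMonomials, ← Polynomial.X_pow_eq_monomial,
      hm0, ← pow_mul, ← pow_add]
    congr 1
    ring
  rw [hexp]
  refine (Polynomial.basisMonomials K).linearIndependent.comp _ fun ⟨u, w⟩ ⟨u', w'⟩ h => ?_
  obtain ⟨hU, hW⟩ := Nat.eq_and_eq_of_mul_add_mul_eq hcop w.2 w'.2 h
  obtain rfl : w = w' := Fin.ext hW
  exact Prod.ext (Nat.add_right_cancel hU) rfl

theorem mem_curveIdeal {m : ℕ → ℕ} {f : MvPolynomial (Fin (p + 1)) K} :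
    f ∈ curveIdeal K p m ↔
      aeval (fun i : Fin (p + 1) => (Polynomial.X : Polynomial K) ^ m i) f = 0 :=
  Iff.rfl

theorem span_Gset_le_curveIdeal (hbp : b ≤ p) {m : ℕ → ℕ}
    (hm : ∀ i, m i = a * p + b + i * d) :
    Ideal.span (Gset K p a b d) ≤ curveIdeal K p m := by
  refine Ideal.span_le.mpr ?_
  rintro g (⟨i, j, -, hij, hj, rfl⟩ | ⟨i, hi, rfl⟩) <;>
    simp only [SetLike.mem_coe, mem_curveIdeal]
  · have heps : eps p i j ≤ p ∧ i + j - eps p i j ≤ p ∧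
        eps p i j + (i + j - eps p i j) = i + j := by
      unfold eps; split_ifs <;> omega
    have hd : eps p i j * d + (i + j - eps p i j) * d = i * d + j * d := by
      rw [← add_mul, ← add_mul, heps.2.2]
    rw [phi, map_sub, map_mul, map_mul, aeval_X_natCast (by omega), aeval_X_natCast hj.le,
      aeval_X_natCast heps.1, aeval_X_natCast heps.2.1, ← pow_add, ← pow_add, hm, hm, hm, hm,
      sub_eq_zero]
    congr 1
    omega
  · rw [psi, map_sub, map_mul, map_mul, map_pow, map_pow, aeval_X_natCast (by omega),
      aeval_X_natCast le_rfl, aeval_X_natCast (by omega), aeval_X, Fin.val_zero, ← pow_mul,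
      ← pow_mul, ← pow_add, ← pow_add, hm, hm, hm, hm, sub_eq_zero]
    congr 1
    ring

end MonomialCurve

theorem curveIdeal_eq_span_Gset_general
    (K : Type*) [Field K]
    (p d a b : ℕ) (hb1 : 1 ≤ b) (hbp : b ≤ p)
    (m : ℕ → ℕ) (hm : ∀ i, m i = a * p + b + i * d)
    (hgcd : Nat.gcd (m 0) d = 1) :
    curveIdeal K p m = Ideal.span (Gset K p a b d) := by
  have hcop : (a * p + b).Coprime d := by rwa [hm, zero_mul, add_zero] at hgcd
  have hker : (curveIdeal K p m).restrictScalars K =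
      LinearMap.ker
        (aeval fun i : Fin (p + 1) => (Polynomial.X : Polynomial K) ^ m i).toLinearMap :=
    rfl
  apply Submodule.restrictScalars_injective K
  rw [hker]
  exact LinearMap.ker_eq_of_span_sup_eq_top (MonomialCurve.span_Gset_le_curveIdeal hbp hm)
    (MonomialCurve.span_standardMonomial_sup_eq_top hb1 hbp)
    (MonomialCurve.linearIndependent_aeval_standardMonomial hb1 hbp hm hcop)

/-- The ideal `℘` equals the ideal generated by `𝒢'`. -/
theorem curveIdeal_eq_span_Gset
    (K : Type*) [Field K]
    (p d a b : ℕ) (hp : 2 ≤ p) (hd : 1 ≤ d) (ha : 1 ≤ a) (hb1 : 1 ≤ b) (hbp : b ≤ p)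
    (m : ℕ → ℕ) (hm : ∀ i, m i = a * p + b + i * d)
    (hgcd : Nat.gcd (m 0) d = 1)
    (hmin : ∀ i ≤ p, m i ∉ AddSubmonoid.closure {x : ℕ | ∃ j ≤ p, j ≠ i ∧ x = m j}) :
    curveIdeal K p m = Ideal.span (Gset K p a b d) :=
  curveIdeal_eq_span_Gset_general K p d a b hb1 hbp m hm hgcd
end

section
/- The set 𝒢' is a minimal generating set for the ideal ℘: no element of 𝒢' belongs to the ideal of R generated by the remaining elements of 𝒢'. -/
open MvPolynomial
open Fin.NatCast

/-! Every element of `𝒢'` is a binomial `x^α - x^β`. For a set `s` of exponents, the linear form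
summing the coefficients of the monomials with exponent in `s` vanishes on the ideal generated by
binomials `x^α - x^β` such that `ν + α ∈ s ↔ ν + β ∈ s` for all `ν`, but not on a binomial with
exactly one exponent in `s`. For `φ(i,j)` take `s = {X_i X_j}`: no term of another generator divides
`X_i X_j`, as each involves `X_0` or `X_p` or is another product `X_{i'} X_{j'}`. For `ψ(b,i)` take
the monomials of degree `a + d + 1` and of weight `∑ k u_k = i`: every `φ` is homogeneous for both
gradings, and no multiple of a term of another `ψ(b,i')` lies in `s`. -/

namespace MvPolynomial

variable {σ R : Type*} [CommRing R]

noncomputable def coeffSumOn (s : Set (σ →₀ ℕ)) : MvPolynomial σ R →ₗ[R] R :=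
  Finsupp.linearCombination R (s.indicator 1) ∘ₗ (AddMonoidAlgebra.coeffLinearEquiv R).toLinearMap

theorem coeffSumOn_monomial (s : Set (σ →₀ ℕ)) (u : σ →₀ ℕ) (c : R) :
    coeffSumOn s (monomial u c) = s.indicator (fun _ => c) u := by
  classical
  rw [coeffSumOn, ← single_eq_monomial]
  simp [Set.indicator_apply]

theorem coeffSumOn_mul_monomial (s : Set (σ →₀ ℕ)) (q : MvPolynomial σ R) (α : σ →₀ ℕ) :
    coeffSumOn s (q * monomial α 1) = coeffSumOn ((· + α) ⁻¹' s) q := by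
  induction q using MvPolynomial.induction_on' with
  | monomial u c => simp only [monomial_mul, mul_one, coeffSumOn_monomial]; rfl
  | add f g hf hg => rw [add_mul, map_add, map_add, hf, hg]

theorem coeffSumOn_mul_eq_zero_of_mem_span {s : Set (σ →₀ ℕ)} {S : Set (MvPolynomial σ R)}
    (hS : ∀ f ∈ S, ∃ α β : σ →₀ ℕ,
      f = monomial α 1 - monomial β 1 ∧ ∀ ν, ν + α ∈ s ↔ ν + β ∈ s)
    {g : MvPolynomial σ R} (hg : g ∈ Ideal.span S) (q : MvPolynomial σ R) :
    coeffSumOn s (q * g) = 0 := by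
  induction hg using Submodule.span_induction generalizing q with
  | mem f hf =>
    obtain ⟨α, β, rfl, hαβ⟩ := hS f hf
    rw [mul_sub, map_sub, coeffSumOn_mul_monomial, coeffSumOn_mul_monomial, sub_eq_zero]
    exact congrArg (coeffSumOn · q) (Set.ext hαβ)
  | zero => rw [mul_zero, map_zero]
  | add f g _ _ hf hg => rw [mul_add, map_add, hf, hg, add_zero]
  | smul r f _ hf => rw [smul_eq_mul, ← mul_assoc, hf]

theorem monomial_sub_monomial_notMem_span [Nontrivial R] {s : Set (σ →₀ ℕ)}
    {S : Set (MvPolynomial σ R)}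
    (hS : ∀ f ∈ S, ∃ α β : σ →₀ ℕ,
      f = monomial α 1 - monomial β 1 ∧ ∀ ν, ν + α ∈ s ↔ ν + β ∈ s)
    {α β : σ →₀ ℕ} (hαβ : ¬(α ∈ s ↔ β ∈ s)) :
    (monomial α 1 - monomial β 1 : MvPolynomial σ R) ∉ Ideal.span S := by
  intro hg
  have := coeffSumOn_mul_eq_zero_of_mem_span hS hg 1
  rw [one_mul, map_sub, coeffSumOn_monomial, coeffSumOn_monomial] at this
  by_cases hα : α ∈ s <;> simp_all [Set.indicator_of_mem, Set.indicator_of_notMem]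

theorem X_mul_X_pow_eq_monomial (k l : σ) (e : ℕ) :
    (X k * X l ^ e : MvPolynomial σ R) = monomial (Finsupp.single k 1 + Finsupp.single l e) 1 := by
  rw [X_pow_eq_monomial, X, monomial_mul, one_mul]

end MvPolynomial

theorem Finsupp.eq_zero_of_degree_add_le {σ : Type*} {ν α : σ →₀ ℕ}
    (h : (ν + α).degree ≤ α.degree) : ν = 0 := by
  rw [map_add] at h
  exact (degree_eq_zero_iff ν).mp (by omega)

theorem Fin.natCast_eq_natCast_iff {p k l : ℕ} (hk : k ≤ p) (hl : l ≤ p) :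
    (k : Fin (p + 1)) = l ↔ k = l := by
  rw [Fin.ext_iff, Fin.val_cast_of_lt (by omega), Fin.val_cast_of_lt (by omega)]

theorem eps_cases (p i j : ℕ) : i + j < p ∧ eps p i j = i + j ∨ p ≤ i + j ∧ eps p i j = p := by
  unfold eps
  split_ifs <;> omega

section MonomialExponents

open Finsupp

variable {p : ℕ}

/-- The exponent vector of `X_k · X_l ^ e` in `K[X_0, …, X_p]`. -/
noncomputable def monoExp (p k l e : ℕ) : Fin (p + 1) →₀ ℕ :=
  single (k : Fin (p + 1)) 1 + single (l : Fin (p + 1)) e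

theorem phi_eq (K : Type*) [Field K] (p i j : ℕ) :
    phi K p i j = monomial (monoExp p i j 1) 1
      - monomial (monoExp p (eps p i j) (i + j - eps p i j) 1) 1 := by
  simp only [phi, monoExp, ← X_mul_X_pow_eq_monomial, pow_one]

theorem psi_eq (K : Type*) [Field K] (p a b d i : ℕ) :
    psi K p a b d i = monomial (monoExp p (b + i) p a) 1 - monomial (monoExp p i 0 (a + d)) 1 := by
  simp only [psi, monoExp, ← X_mul_X_pow_eq_monomial, Nat.cast_zero]

theorem degree_monoExp (k l e : ℕ) : (monoExp p k l e).degree = 1 + e := by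
  simp [monoExp]

theorem weight_val_monoExp {k l : ℕ} (hk : k ≤ p) (hl : l ≤ p) (e : ℕ) :
    weight Fin.val (monoExp p k l e) = k + e * l := by
  simp [monoExp, weight_single, Fin.val_cast_of_lt (Nat.lt_succ_of_le hk),
    Fin.val_cast_of_lt (Nat.lt_succ_of_le hl)]

theorem one_le_monoExp_apply_left (k l e : ℕ) : 1 ≤ monoExp p k l e k := by
  simp [monoExp]

theorem le_monoExp_apply_right (k l e : ℕ) : e ≤ monoExp p k l e l := by
  simp [monoExp]

theorem monoExp_apply_eq_zero {k l x e : ℕ} (hk : k ≤ p) (hl : l ≤ p) (hx : x ≤ p)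
    (hxk : x ≠ k) (hxl : x ≠ l) : monoExp p k l e x = 0 := by
  simp [monoExp, Fin.natCast_eq_natCast_iff, hk, hl, hx, hxk.symm, hxl.symm]

theorem ne_monoExp_of_apply_pos {α : Fin (p + 1) →₀ ℕ} {k l x e : ℕ} (hk : k ≤ p) (hl : l ≤ p)
    (hx : x ≤ p) (hxk : x ≠ k) (hxl : x ≠ l) (hα : 0 < α x) : α ≠ monoExp p k l e := by
  rintro rfl
  rw [monoExp_apply_eq_zero hk hl hx hxk hxl] at hα
  exact lt_irrefl 0 hα

theorem monoExp_one_inj {i j i' j' : ℕ} (hij : i ≤ j) (hj : j ≤ p) (hij' : i' ≤ j') (hj' : j' ≤ p)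
    (h : monoExp p i' j' 1 = monoExp p i j 1) : i' = i ∧ j' = j := by
  rw [monoExp, monoExp, single_add_single_eq_single_add_single one_ne_zero one_ne_zero] at h
  simp only [Fin.natCast_eq_natCast_iff (p := p) (by omega : i' ≤ p) (by omega : i ≤ p),
    Fin.natCast_eq_natCast_iff (p := p) (by omega : i' ≤ p) (by omega : j ≤ p),
    Fin.natCast_eq_natCast_iff (p := p) hj' (by omega : i ≤ p),
    Fin.natCast_eq_natCast_iff (p := p) hj' hj] at h
  omega

end MonomialExponents

section Minimality

open Finsupp

variable {K : Type*} [Field K] {p a b d : ℕ}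

theorem monoExp_eps_ne_monoExp {i j i' j' : ℕ} (hi : 1 ≤ i) (hij : i ≤ j) (hjp : j < p) :
    monoExp p (eps p i' j') (i' + j' - eps p i' j') 1 ≠ monoExp p i j 1 := by
  rcases eps_cases p i' j' with ⟨-, he⟩ | ⟨-, he⟩
  · rw [he, Nat.sub_self]
    exact ne_monoExp_of_apply_pos (x := 0) (by omega) (by omega) (Nat.zero_le p) (by omega)
      (by omega) (le_monoExp_apply_right _ _ _)
  · rw [he]
    exact ne_monoExp_of_apply_pos (x := p) (by omega) (by omega) le_rfl (by omega) (by omega)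
      (one_le_monoExp_apply_left _ _ _)

theorem phi_notMem_span_Gset_diff (ha : 1 ≤ a) {i j : ℕ} (hi : 1 ≤ i) (hij : i ≤ j) (hjp : j < p) :
    phi K p i j ∉ Ideal.span (Gset K p a b d \ {phi K p i j}) := by
  have hdeg {α : Fin (p + 1) →₀ ℕ} (hα : 2 ≤ α.degree) (hne : α ≠ monoExp p i j 1) (ν) :
      ν + α ∉ ({monoExp p i j 1} : Set _) := fun h => by
    rw [Set.mem_singleton_iff] at h
    obtain rfl : ν = 0 := eq_zero_of_degree_add_le (by rw [h, degree_monoExp]; exact hα)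
    exact hne (by rwa [zero_add] at h)
  suffices h : monomial (monoExp p i j 1) 1
      - monomial (monoExp p (eps p i j) (i + j - eps p i j) 1) 1
      ∉ Ideal.span (Gset K p a b d \ {phi K p i j}) by rwa [← phi_eq] at h
  refine monomial_sub_monomial_notMem_span (s := {monoExp p i j 1}) ?_ ?_
  · rintro f ⟨⟨i', j', -, hij', hj'p, rfl⟩ | ⟨i', -, rfl⟩, hne⟩
    · refine ⟨_, _, phi_eq K p i' j', fun ν => iff_of_false ?_ ?_⟩
      · refine hdeg (by simp [degree_monoExp]) (fun h => hne ?_) ν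
        obtain ⟨rfl, rfl⟩ := monoExp_one_inj hij hjp.le hij' hj'p.le h
        rfl
      · exact hdeg (by simp [degree_monoExp]) (monoExp_eps_ne_monoExp hi hij hjp) ν
    · refine ⟨_, _, psi_eq K p a b d i', fun ν => iff_of_false ?_ ?_⟩
      · refine hdeg (by rw [degree_monoExp]; omega) ?_ ν
        exact ne_monoExp_of_apply_pos (x := p) (by omega) (by omega) le_rfl
          (by omega) (by omega) (lt_of_lt_of_le ha (le_monoExp_apply_right _ _ _))
      · refine hdeg (by rw [degree_monoExp]; omega) ?_ ν
        exact ne_monoExp_of_apply_pos (x := 0) (by omega) (by omega) (by omega) (by omega)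
          (by omega) (lt_of_lt_of_le (by omega) (le_monoExp_apply_right _ _ _))
  · simpa using monoExp_eps_ne_monoExp hi hij hjp

theorem psi_notMem_span_Gset_diff (hd : 1 ≤ d) (ha : 1 ≤ a) (hb : 1 ≤ b) (hbp : b ≤ p)
    {i : ℕ} (hi : i ≤ p - b) :
    psi K p a b d i ∉ Ideal.span (Gset K p a b d \ {psi K p a b d i}) := by
  suffices h : monomial (monoExp p (b + i) p a) 1 - monomial (monoExp p i 0 (a + d)) 1
      ∉ Ideal.span (Gset K p a b d \ {psi K p a b d i}) by rwa [← psi_eq] at h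
  refine monomial_sub_monomial_notMem_span
    (s := {u | u.degree = a + d + 1 ∧ weight Fin.val u = i}) ?_ ?_
  · rintro f ⟨⟨i', j', -, hij', hj'p, rfl⟩ | ⟨i', hi', rfl⟩, hne⟩
    · refine ⟨_, _, phi_eq K p i' j', fun ν => ?_⟩
      obtain ⟨he, he', he''⟩ :
          eps p i' j' ≤ p ∧ eps p i' j' ≤ i' + j' ∧ i' + j' - eps p i' j' ≤ p := by
        rcases eps_cases p i' j' with h | h <;> omega
      simp only [Set.mem_ofPred_eq, map_add, degree_monoExp,
        weight_val_monoExp (p := p) (by omega : i' ≤ p) (by omega : j' ≤ p),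
        weight_val_monoExp (p := p) he he'']
      omega
    · have hii' : i' ≠ i := by rintro rfl; exact hne rfl
      refine ⟨_, _, psi_eq K p a b d i', fun ν => iff_of_false ?_ ?_⟩
      · rintro ⟨-, hw⟩
        rw [map_add, weight_val_monoExp (by omega) le_rfl] at hw
        have := Nat.le_mul_of_pos_left p ha
        omega
      · rintro ⟨hdeg, hw⟩
        obtain rfl : ν = 0 := eq_zero_of_degree_add_le (by rw [hdeg, degree_monoExp]; omega)
        rw [zero_add, weight_val_monoExp (by omega) (Nat.zero_le p)] at hw
        omega
  · simp only [Set.mem_ofPred_eq, degree_monoExp, weight_val_monoExp (p := p) (by omega : i ≤ p)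
      (Nat.zero_le p)]
    omega

end Minimality

theorem Gset_minimal_general
    (K : Type*) [Field K]
    (p d a b : ℕ) (hd : 1 ≤ d) (ha : 1 ≤ a) (hb1 : 1 ≤ b) (hbp : b ≤ p) :
    ∀ g ∈ Gset K p a b d, g ∉ Ideal.span (Gset K p a b d \ {g}) := by
  rintro g (⟨i, j, hi, hij, hjp, rfl⟩ | ⟨i, hi, rfl⟩)
  · exact phi_notMem_span_Gset_diff ha hi hij hjp
  · exact psi_notMem_span_Gset_diff hd ha hb1 hbp hi

/-- `𝒢'` is a minimal generating set for `℘`: no element of `𝒢'` belongs to the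
ideal generated by the remaining elements of `𝒢'`. -/
theorem Gset_minimal
    (K : Type*) [Field K]
    (p d a b : ℕ) (hp : 2 ≤ p) (hd : 1 ≤ d) (ha : 1 ≤ a) (hb1 : 1 ≤ b) (hbp : b ≤ p)
    (m : ℕ → ℕ) (hm : ∀ i, m i = a * p + b + i * d)
    (hgcd : Nat.gcd (m 0) d = 1)
    (hmin : ∀ i ≤ p, m i ∉ AddSubmonoid.closure {x : ℕ | ∃ j ≤ p, j ≠ i ∧ x = m j}) :
    ∀ g ∈ Gset K p a b d, g ∉ Ideal.span (Gset K p a b d \ {g}) :=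
  Gset_minimal_general K p d a b hd ha hb1 hbp
end
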